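/- Let L be a finite lattice in which all reducible elements are pairwise comparable, i.e., for all reducible x, y ∈ L, x ≤ y or y ≤ x. Then L is dismantlable: there exists a chain L₁ ⊂ L₂ ⊂ ⋯ ⊂ Lₙ = L (n = |L|) of subsets of L, each closed under the join and meet of L, with |L_i| = i for all i. -/
import Mathlib

private lemma rc_step_lemma {L : Type*} [Lattice L] [DecidableEq L]
    (hcomp : ∀ x y : L,
      ((∃ u v : L, u ≠ x ∧ v ≠ x ∧ u ⊔ v = x) ∨ (∃ u v : L, u ≠ x ∧ v ≠ x ∧ u ⊓ v = x)) →
      ((∃ u v : L, u ≠ y ∧ v ≠ y ∧ u ⊔ v = y) ∨ (∃ u v : L, u ≠ y ∧ v ≠ y ∧ u ⊓ v = y)) →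
      x ≤ y ∨ y ≤ x)
    (S : Finset L) (hS : S.Nonempty)
    (hcl : ∀ a ∈ S, ∀ b ∈ S, a ⊔ b ∈ S ∧ a ⊓ b ∈ S) :
    ∃ x ∈ S, ∀ a ∈ S.erase x, ∀ b ∈ S.erase x,
      a ⊔ b ∈ S.erase x ∧ a ⊓ b ∈ S.erase x := by
  by_cases hred : ∃ x ∈ S, ¬ ∃ u ∈ S, ∃ v ∈ S, u ≠ x ∧ v ≠ x ∧ (u ⊔ v = x ∨ u ⊓ v = x)
  · obtain ⟨x, hx, hnr⟩ := hred
    refine ⟨x, hx, ?_⟩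
    intro a ha b hb
    have ha' := Finset.mem_of_mem_erase ha
    have hb' := Finset.mem_of_mem_erase hb
    have hane := Finset.ne_of_mem_erase ha
    have hbne := Finset.ne_of_mem_erase hb
    obtain ⟨hj, hm⟩ := hcl a ha' b hb'
    constructor
    · refine Finset.mem_erase.mpr ⟨?_, hj⟩
      intro h; exact hnr ⟨a, ha', b, hb', hane, hbne, Or.inl h⟩
    · refine Finset.mem_erase.mpr ⟨?_, hm⟩
      intro h; exact hnr ⟨a, ha', b, hb', hane, hbne, Or.inr h⟩
  · exfalso
    push_neg at hred
    obtain ⟨x, hx⟩ := hS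
    obtain ⟨u, hu, v, hv, hune, hvne, hcase⟩ := hred x hx
    have redfun : ∀ w ∈ S,
        (∃ a b : L, a ≠ w ∧ b ≠ w ∧ a ⊔ b = w) ∨
        (∃ a b : L, a ≠ w ∧ b ≠ w ∧ a ⊓ b = w) := by
      intro w hw
      obtain ⟨a, _, b, _, hane, hbne, hc⟩ := hred w hw
      rcases hc with h | h
      · exact Or.inl ⟨a, b, hane, hbne, h⟩
      · exact Or.inr ⟨a, b, hane, hbne, h⟩
    have hcmp := hcomp u v (redfun u hu) (redfun v hv)
    rcases hcmp with h | h
    · rcases hcase with hc | hc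
      · rw [sup_eq_right.mpr h] at hc; exact hvne hc
      · rw [inf_eq_left.mpr h] at hc; exact hune hc
    · rcases hcase with hc | hc
      · rw [sup_eq_left.mpr h] at hc; exact hune hc
      · rw [inf_eq_right.mpr h] at hc; exact hvne hc

private lemma rc_chain_lemma {L : Type*} [Lattice L] [DecidableEq L]
    (hcomp : ∀ x y : L,
      ((∃ u v : L, u ≠ x ∧ v ≠ x ∧ u ⊔ v = x) ∨ (∃ u v : L, u ≠ x ∧ v ≠ x ∧ u ⊓ v = x)) →
      ((∃ u v : L, u ≠ y ∧ v ≠ y ∧ u ⊔ v = y) ∨ (∃ u v : L, u ≠ y ∧ v ≠ y ∧ u ⊓ v = y)) →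
      x ≤ y ∨ y ≤ x) :
    ∀ m : ℕ, ∀ S : Finset L, S.card = m →
      (∀ a ∈ S, ∀ b ∈ S, a ⊔ b ∈ S ∧ a ⊓ b ∈ S) →
      ∃ Ls : ℕ → Set L,
        (∀ i, 1 ≤ i → i < m → Ls i ⊂ Ls (i + 1)) ∧
        Ls m = ↑S ∧
        (∀ i, 1 ≤ i → i ≤ m →
          (Ls i).ncard = i ∧ ∀ a ∈ Ls i, ∀ b ∈ Ls i, a ⊔ b ∈ Ls i ∧ a ⊓ b ∈ Ls i) := by
  intro m
  induction m with
  | zero =>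
    intro S hcard hcl
    exact ⟨fun _ => ↑S, fun i h1 h2 => absurd h2 (by omega), rfl,
      fun i h1 h2 => absurd h2 (by omega)⟩
  | succ m ih =>
    intro S hcard hcl
    have hS : S.Nonempty := Finset.card_pos.mp (by omega)
    obtain ⟨x, hx, hcl'⟩ := rc_step_lemma hcomp S hS hcl
    have hcard' : (S.erase x).card = m := by
      rw [Finset.card_erase_of_mem hx, hcard]; omega
    obtain ⟨Ls', h1, h2, h3⟩ := ih (S.erase x) hcard' hcl'
    refine ⟨fun i => if i ≤ m then Ls' i else ↑S, ?_, ?_, ?_⟩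
    · intro i hi1 hi2
      by_cases h : i < m
      · simp only [if_pos (by omega : i ≤ m), if_pos (by omega : i + 1 ≤ m)]
        exact h1 i hi1 h
      · have him : i = m := by omega
        subst him
        simp only [if_pos le_rfl, if_neg (by omega : ¬ i + 1 ≤ i), h2]
        exact_mod_cast Finset.coe_ssubset.mpr (Finset.erase_ssubset hx)
    · simp only [if_neg (by omega : ¬ m + 1 ≤ m)]
    · intro i hi1 hi2
      by_cases h : i ≤ m
      · simp only [if_pos h]
        exact h3 i hi1 h
      · have him : i = m + 1 := by omega
        subst him
        simp only [if_neg (by omega : ¬ m + 1 ≤ m)]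
        refine ⟨by rw [Set.ncard_coe_finset, hcard], ?_⟩
        intro a ha b hb
        exact_mod_cast hcl a (by exact_mod_cast ha) b (by exact_mod_cast hb)

/-- **RC-lattices are dismantlable.**  Let `L` be a finite lattice in which all reducible
elements are pairwise comparable.  Then `L` is dismantlable: there is a chain
`L₁ ⊂ L₂ ⊂ ⋯ ⊂ Lₙ = L` (`n = |L|`) of sublattices of `L` with `|Lᵢ| = i` for all `i`. -/
theorem RC_lattice_is_dismantlable {L : Type*} [Lattice L] [Fintype L]
    (hcomp : ∀ x y : L,
      ((∃ u v : L, u ≠ x ∧ v ≠ x ∧ u ⊔ v = x) ∨ (∃ u v : L, u ≠ x ∧ v ≠ x ∧ u ⊓ v = x)) →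
      ((∃ u v : L, u ≠ y ∧ v ≠ y ∧ u ⊔ v = y) ∨ (∃ u v : L, u ≠ y ∧ v ≠ y ∧ u ⊓ v = y)) →
      x ≤ y ∨ y ≤ x) :
    ∃ Ls : ℕ → Set L,
      (∀ i, 1 ≤ i → i < Fintype.card L → Ls i ⊂ Ls (i + 1)) ∧
      Ls (Fintype.card L) = Set.univ ∧
      (∀ i, 1 ≤ i → i ≤ Fintype.card L →
        (Ls i).ncard = i ∧
        ∀ a ∈ Ls i, ∀ b ∈ Ls i, a ⊔ b ∈ Ls i ∧ a ⊓ b ∈ Ls i) := by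
  classical
  obtain ⟨Ls, h1, h2, h3⟩ := rc_chain_lemma hcomp (Fintype.card L) Finset.univ
    (Finset.card_univ) (by simp)
  exact ⟨Ls, h1, by rw [h2]; simp, h3⟩
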